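/- arXiv:2212.12821 — 2 statements merged into one kernel-verified Lean document; each statement's English description precedes it below -/
import Mathlib

section
/- For 1<p<∞ and 1 ≤ r ≤ min{2,p}, the function t ↦ V_p(t^{1/r}) is convex on [0,∞). Moreover, this fails for r > min{2,p}: the infimum over ξ>0 of ξV_p''(ξ)/V_p'(ξ) = ((p-1)ξ^2+1)/(ξ^2+1) equals min{p,2} - 1. -/
noncomputable def Vp (p t : ℝ) : ℝ := (1 + t ^ 2) ^ (p / 2) - 1

/-!
With `α = 2 / r ≥ 1`, `V_p(t ^ (1/r)) + 1 = ‖(1, t)‖_α ^ (p/r)`. The `ℓ^α` norm of `(1, t)` is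
convex in `t ≥ 0` by Minkowski's inequality, and `x ↦ x ^ (p/r)` is convex and increasing on
`[0, ∞)` since `p / r ≥ 1`, so the composition is convex.

The ratio equals `(p - 1) + (2 - p) / (ξ ^ 2 + 1)`, so it lies between `p - 1` and `1`, and it
tends to `p - 1` as `ξ → ∞` and to `1` as `ξ → 0`; the smaller of the two is the infimum.
-/

open Set Filter Topology Real

theorem ConvexOn.comp_of_mapsTo {𝕜 E β γ : Type*} [Semiring 𝕜] [PartialOrder 𝕜]
    [AddCommMonoid E] [AddCommMonoid β] [PartialOrder β] [AddCommMonoid γ] [PartialOrder γ]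
    [SMul 𝕜 E] [SMul 𝕜 β] [SMul 𝕜 γ] {s : Set E} {t : Set β} {f : E → β} {g : β → γ}
    (hg : ConvexOn 𝕜 t g) (hg_mono : MonotoneOn g t) (hf : ConvexOn 𝕜 s f) (hst : MapsTo f s t) :
    ConvexOn 𝕜 s (g ∘ f) :=
  ⟨hf.1, fun _ hx _ hy _ _ ha hb hab =>
    (hg_mono (hst (hf.1 hx hy ha hb hab)) (hg.1 (hst hx) (hst hy) ha hb hab)
      (hf.2 hx hy ha hb hab)).trans (hg.2 (hst hx) (hst hy) ha hb hab)⟩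

lemma rpow_add_mul_rpow_rpow_inv {α a x : ℝ} (hα : α ≠ 0) (ha : 0 ≤ a) (hx : 0 ≤ x) :
    (a ^ α + (a * x) ^ α) ^ α⁻¹ = a * (1 + x ^ α) ^ α⁻¹ := by
  rw [mul_rpow ha hx, ← mul_one_add, mul_rpow (by positivity) (by positivity),
    rpow_rpow_inv ha hα]

lemma convexOn_one_add_rpow_rpow_inv {α : ℝ} (hα : 1 ≤ α) :
    ConvexOn ℝ (Ici 0) fun t : ℝ => (1 + t ^ α) ^ α⁻¹ := by
  refine ⟨convex_Ici 0, fun x (hx : 0 ≤ x) y (hy : 0 ≤ y) a b ha hb hab => ?_⟩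
  have minkowski := Lp_add_le_of_nonneg (s := Finset.univ) (f := ![a, a * x])
    (g := ![b, b * y]) hα (by simp [Fin.forall_fin_two, ha, mul_nonneg ha hx])
    (by simp [Fin.forall_fin_two, hb, mul_nonneg hb hy])
  have hα0 : α ≠ 0 := by positivity
  simp only [Fin.sum_univ_two, Matrix.cons_val_zero, Matrix.cons_val_one, one_div,
    rpow_add_mul_rpow_rpow_inv hα0 ha hx, rpow_add_mul_rpow_rpow_inv hα0 hb hy] at minkowski
  rwa [hab, one_rpow] at minkowski

lemma convexOn_Vp_rpow_one_div {p r : ℝ} (hr : 0 < r) (hr2 : r ≤ 2) (hrp : r ≤ p) :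
    ConvexOn ℝ (Ici 0) fun t : ℝ => Vp p (t ^ (1 / r)) := by
  have hN := convexOn_one_add_rpow_rpow_inv ((one_le_div hr).2 hr2)
  have hpow : ConvexOn ℝ (Ici 0) fun x : ℝ => x ^ (p / r) := convexOn_rpow ((one_le_div hr).2 hrp)
  have hpow_mono : MonotoneOn (fun x : ℝ => x ^ (p / r)) (Ici 0) :=
    fun x hx y _ hxy => rpow_le_rpow hx hxy (div_nonneg (hr.le.trans hrp) hr.le)
  have hmaps : MapsTo (fun t : ℝ => (1 + t ^ (2 / r)) ^ (2 / r)⁻¹) (Ici 0) (Ici 0) :=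
    fun t (ht : 0 ≤ t) => show (0 : ℝ) ≤ _ by positivity
  refine ((hpow.comp_of_mapsTo hpow_mono hN hmaps).add_const (-1)).congr fun t (ht : 0 ≤ t) => ?_
  have hsq : (t ^ (1 / r)) ^ 2 = t ^ (2 / r) := by
    rw [← rpow_natCast, ← rpow_mul ht]; ring_nf
  have hbase : (0 : ℝ) ≤ 1 + t ^ (2 / r) := by positivity
  change ((1 + t ^ (2 / r)) ^ (2 / r)⁻¹) ^ (p / r) + -1 = Vp p (t ^ (1 / r))
  rw [Vp, hsq, ← rpow_mul hbase, ← sub_eq_add_neg]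
  congr 2
  field_simp

/-- `ξ V_p''(ξ) / V_p'(ξ)`. -/
noncomputable def vpDerivRatio (p ξ : ℝ) : ℝ := ((p - 1) * ξ ^ 2 + 1) / (ξ ^ 2 + 1)

lemma vpDerivRatio_eq (p ξ : ℝ) :
    vpDerivRatio p ξ = p - 1 + (2 - p) / (ξ ^ 2 + 1) := by
  rw [vpDerivRatio]; field_simp; ring

lemma min_sub_one_le_vpDerivRatio (p ξ : ℝ) : min p 2 - 1 ≤ vpDerivRatio p ξ := by
  rw [vpDerivRatio, le_div_iff₀ (by positivity)]
  rcases le_total p 2 with h | h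
  · rw [min_eq_left h]; nlinarith [sq_nonneg ξ]
  · rw [min_eq_right h]; nlinarith [sq_nonneg ξ]

lemma tendsto_vpDerivRatio_atTop (p : ℝ) : Tendsto (vpDerivRatio p) atTop (𝓝 (p - 1)) := by
  simp only [funext (vpDerivRatio_eq p)]
  have h : Tendsto (fun ξ : ℝ => ξ ^ 2 + 1) atTop atTop :=
    tendsto_atTop_add_const_right _ 1 (tendsto_pow_atTop two_ne_zero)
  simpa [div_eq_mul_inv] using tendsto_const_nhds.add (h.inv_tendsto_atTop.const_mul (2 - p))

lemma tendsto_vpDerivRatio_nhdsGT_zero (p : ℝ) : Tendsto (vpDerivRatio p) (𝓝[>] 0) (𝓝 1) := by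
  have h : Continuous (vpDerivRatio p) := by
    unfold vpDerivRatio; fun_prop (disch := intro; positivity)
  simpa [vpDerivRatio] using (h.tendsto 0).mono_left nhdsWithin_le_nhds

theorem stmt_2_general (p r : ℝ) (hr1 : 1 ≤ r) (hr2 : r ≤ min 2 p) :
    ConvexOn ℝ (Set.Ici 0) (fun t : ℝ => Vp p (t ^ (1 / r))) ∧
    IsGLB {y : ℝ | ∃ ξ : ℝ, 0 < ξ ∧ y = ((p - 1) * ξ ^ 2 + 1) / (ξ ^ 2 + 1)}
      (min p 2 - 1) := by
  refine ⟨convexOn_Vp_rpow_one_div (by linarith) (hr2.trans (min_le_left _ _))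
    (hr2.trans (min_le_right _ _)), ?_⟩
  refine isGLB_of_mem_closure (fun y ⟨ξ, _, hy⟩ => hy ▸ min_sub_one_le_vpDerivRatio p ξ) ?_
  rcases le_total p 2 with hp2 | hp2
  · rw [min_eq_left hp2]
    exact mem_closure_of_tendsto (tendsto_vpDerivRatio_atTop p)
      ((eventually_gt_atTop 0).mono fun ξ hξ => ⟨ξ, hξ, rfl⟩)
  · rw [min_eq_right hp2, show (2 : ℝ) - 1 = 1 by norm_num]
    exact mem_closure_of_tendsto (tendsto_vpDerivRatio_nhdsGT_zero p)
      (eventually_mem_nhdsWithin.mono fun ξ hξ => ⟨ξ, hξ, rfl⟩)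

theorem stmt_2 (p r : ℝ) (hp : 1 < p) (hr1 : 1 ≤ r) (hr2 : r ≤ min 2 p) :
    ConvexOn ℝ (Set.Ici 0) (fun t : ℝ => Vp p (t ^ (1 / r))) ∧
    IsGLB {y : ℝ | ∃ ξ : ℝ, 0 < ξ ∧ y = ((p - 1) * ξ ^ 2 + 1) / (ξ ^ 2 + 1)}
      (min p 2 - 1) :=
  stmt_2_general p r hr1 hr2
end

section
/- For 1<p<∞ and z ≠ 0 in a normed space X, one has V_{p'}(V_p(z)/|z|) ≤ C(p) V_p(z), where p' = p/(p-1) is the Hölder conjugate exponent. -/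
/-!
Since `Vp p t` is comparable to `min (t ^ 2) (t ^ p)`, the quotient `Vp p t / t` is at most a
constant times `t` when `t ≤ 1`, where the outer `Vp` is quadratic and gives `≲ t ^ 2 ≲ Vp p t`;
for `t ≥ 1` it is at most a constant times `t ^ (p - 1)`, and the outer `Vp` then gives
`≲ t ^ ((p - 1) * p') = t ^ p ≲ Vp p t`.
-/

open Real

lemma exp_sub_one_le_mul_exp (y : ℝ) : exp y - 1 ≤ y * exp y := by
  have h : exp (-y) * exp y = 1 := by rw [← exp_add]; simp
  nlinarith [mul_le_mul_of_nonneg_right (one_sub_le_exp_neg y) (exp_pos y).le]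

lemma one_add_rpow_sub_one_le {a x : ℝ} (ha : 0 ≤ a) (hx : 0 ≤ x) :
    (1 + x) ^ a - 1 ≤ a * x * (1 + x) ^ a := by
  have hlog : log (1 + x) ≤ x := by linarith [log_le_sub_one_of_pos (by linarith : 0 < 1 + x)]
  rw [rpow_def_of_pos (by linarith)]
  calc exp (log (1 + x) * a) - 1 ≤ log (1 + x) * a * exp (log (1 + x) * a) :=
        exp_sub_one_le_mul_exp _
    _ ≤ a * x * exp (log (1 + x) * a) :=
        mul_le_mul_of_nonneg_right (by nlinarith) (exp_pos _).le

lemma rpow_sq_half {t : ℝ} (ht : 0 ≤ t) (r : ℝ) : (t ^ 2) ^ (r / 2) = t ^ r := by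
  rw [← rpow_natCast, ← rpow_mul ht]
  congr 1
  push_cast
  ring

lemma Vp_nonneg {p : ℝ} (hp : 0 ≤ p) (t : ℝ) : 0 ≤ Vp p t := by
  unfold Vp
  linarith [one_le_rpow (by nlinarith : (1 : ℝ) ≤ 1 + t ^ 2) (by positivity : 0 ≤ p / 2)]

lemma Vp_le_Vp_of_le {p p' : ℝ} (h : p ≤ p') (t : ℝ) : Vp p t ≤ Vp p' t := by
  unfold Vp
  linarith [rpow_le_rpow_of_exponent_le (by nlinarith : (1 : ℝ) ≤ 1 + t ^ 2)
    (by linarith : p / 2 ≤ p' / 2)]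

lemma Vp_one (t : ℝ) : Vp 1 t = √(1 + t ^ 2) - 1 := by
  rw [Vp, sqrt_eq_rpow]

lemma Vp_le_mul_sq {r B t : ℝ} (hr : 0 ≤ r) (ht : t ^ 2 ≤ B) :
    Vp r t ≤ r / 2 * (1 + B) ^ (r / 2) * t ^ 2 := by
  calc Vp r t ≤ r / 2 * t ^ 2 * (1 + t ^ 2) ^ (r / 2) :=
        one_add_rpow_sub_one_le (by positivity) (by positivity)
    _ ≤ r / 2 * t ^ 2 * (1 + B) ^ (r / 2) := by gcongr
    _ = r / 2 * (1 + B) ^ (r / 2) * t ^ 2 := by ring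

lemma sq_le_three_mul_Vp {p t : ℝ} (hp : 1 ≤ p) (ht : t ^ 2 ≤ 1) : t ^ 2 ≤ 3 * Vp p t := by
  have hsqrt : 1 + t ^ 2 / 3 ≤ √(1 + t ^ 2) :=
    (le_sqrt (by positivity) (by positivity)).mpr (by nlinarith)
  linarith [Vp_one t, Vp_le_Vp_of_le hp t]

lemma rpow_le_Vp_add_one {p t : ℝ} (hp : 0 ≤ p) (ht : 0 ≤ t) : t ^ p ≤ Vp p t + 1 := by
  rw [Vp, sub_add_cancel, ← rpow_sq_half ht]
  gcongr
  linarith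

lemma rpow_le_four_mul_Vp {p t : ℝ} (hp : 1 ≤ p) (ht : 1 ≤ t) : t ^ p ≤ 4 * Vp p t := by
  have hsqrt : 4 / 3 ≤ √(1 + t ^ 2) := (le_sqrt (by positivity) (by positivity)).mpr (by nlinarith)
  linarith [Vp_one t, Vp_le_Vp_of_le hp t, rpow_le_Vp_add_one (p := p) (by linarith) (by linarith : 0 ≤ t)]

lemma Vp_add_one_le {p t : ℝ} (hp : 0 ≤ p) (ht : 1 ≤ t) : Vp p t + 1 ≤ 2 ^ (p / 2) * t ^ p := by
  rw [Vp, sub_add_cancel, ← rpow_sq_half (by linarith : 0 ≤ t), ← mul_rpow (by norm_num) (by positivity)]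
  gcongr
  nlinarith

lemma Vp_le_one_add_rpow {q s : ℝ} (hq : 0 ≤ q) (hs : 0 ≤ s) : Vp q s ≤ (1 + s) ^ q := by
  calc Vp q s ≤ (1 + s ^ 2) ^ (q / 2) := sub_le_self _ zero_le_one
    _ ≤ ((1 + s) ^ 2) ^ (q / 2) := by gcongr; nlinarith
    _ = (1 + s) ^ q := rpow_sq_half (by linarith) q

lemma exists_Vp_Vp_div_le_of_le_one {p q : ℝ} (hp : 1 ≤ p) (hq : 0 ≤ q) :
    ∃ C, ∀ t, 0 < t → t ≤ 1 → Vp q (Vp p t / t) ≤ C * Vp p t := by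
  set K := p / 2 * 2 ^ (p / 2)
  set M := q / 2 * (1 + K ^ 2) ^ (q / 2)
  refine ⟨3 * M * K ^ 2, fun t ht ht1 => ?_⟩
  have ht2 : t ^ 2 ≤ 1 := by nlinarith
  have hAK : Vp p t ≤ K * t ^ 2 := by
    simpa [one_add_one_eq_two] using Vp_le_mul_sq (by linarith) ht2
  have hs : Vp p t / t ≤ K * t := by rw [div_le_iff₀ ht]; nlinarith
  have hs2 : (Vp p t / t) ^ 2 ≤ K ^ 2 * t ^ 2 := by
    rw [← mul_pow]
    exact pow_le_pow_left₀ (div_nonneg (Vp_nonneg (by linarith) t) ht.le) hs 2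
  have hM : 0 ≤ M := by positivity
  calc Vp q (Vp p t / t) ≤ M * (Vp p t / t) ^ 2 :=
        Vp_le_mul_sq hq (hs2.trans (mul_le_of_le_one_right (sq_nonneg K) ht2))
    _ ≤ M * (K ^ 2 * (3 * Vp p t)) := by grw [hs2, sq_le_three_mul_Vp hp ht2]
    _ = 3 * M * K ^ 2 * Vp p t := by ring

lemma Vp_Vp_div_le_of_one_le {p q t : ℝ} (hp : 1 ≤ p) (hq : 0 ≤ q) (ht : 1 ≤ t) :
    Vp q (Vp p t / t) ≤ (1 + 2 ^ (p / 2)) ^ q * t ^ ((p - 1) * q) := by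
  have ht0 : 0 < t := by linarith
  have hs0 : 0 ≤ Vp p t / t := div_nonneg (Vp_nonneg (by linarith) t) ht0.le
  have hs : Vp p t / t ≤ 2 ^ (p / 2) * t ^ (p - 1) := by
    rw [rpow_sub_one ht0.ne', mul_div_assoc']
    gcongr
    linarith [Vp_add_one_le (p := p) (by linarith) ht]
  have h1 : 1 + Vp p t / t ≤ (1 + 2 ^ (p / 2)) * t ^ (p - 1) := by
    nlinarith [one_le_rpow ht (by linarith : 0 ≤ p - 1)]
  calc Vp q (Vp p t / t) ≤ (1 + Vp p t / t) ^ q := Vp_le_one_add_rpow hq hs0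
    _ ≤ ((1 + 2 ^ (p / 2)) * t ^ (p - 1)) ^ q := by gcongr
    _ = (1 + 2 ^ (p / 2)) ^ q * t ^ ((p - 1) * q) := by
        rw [mul_rpow (by positivity) (by positivity), ← rpow_mul ht0.le]

theorem stmt_3 (p : ℝ) (hp : 1 < p) :
    ∃ C : ℝ, 0 < C ∧
      ∀ (X : Type) [NormedAddCommGroup X], ∀ z : X, z ≠ 0 →
        Vp (p / (p - 1)) (Vp p ‖z‖ / ‖z‖) ≤ C * Vp p ‖z‖ := by
  have hq : 0 ≤ p / (p - 1) := div_nonneg (by linarith) (by linarith)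
  have hpq : (p - 1) * (p / (p - 1)) = p := mul_div_cancel₀ p (by linarith)
  obtain ⟨C, hC⟩ := exists_Vp_Vp_div_le_of_le_one hp.le hq
  set D := (1 + 2 ^ (p / 2) : ℝ) ^ (p / (p - 1))
  refine ⟨max C (4 * D), by positivity, fun X _ z hz => ?_⟩
  have hVp : 0 ≤ Vp p ‖z‖ := Vp_nonneg (by linarith) _
  rcases le_total ‖z‖ 1 with hz1 | hz1
  · calc Vp (p / (p - 1)) (Vp p ‖z‖ / ‖z‖) ≤ C * Vp p ‖z‖ := hC _ (norm_pos_iff.mpr hz) hz1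
      _ ≤ max C (4 * D) * Vp p ‖z‖ := mul_le_mul_of_nonneg_right (le_max_left _ _) hVp
  · calc Vp (p / (p - 1)) (Vp p ‖z‖ / ‖z‖) ≤ D * ‖z‖ ^ p := by
          simpa only [hpq] using Vp_Vp_div_le_of_one_le hp.le hq hz1
      _ ≤ D * (4 * Vp p ‖z‖) := by gcongr; exact rpow_le_four_mul_Vp hp.le hz1
      _ = 4 * D * Vp p ‖z‖ := by ring
      _ ≤ max C (4 * D) * Vp p ‖z‖ := mul_le_mul_of_nonneg_right (le_max_right _ _) hVp
end
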